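/- arXiv:1307.0204 — 7 statements merged into one kernel-verified Lean document; each statement's English description precedes it below -/
import Mathlib

section
/- Let M_X : k → n and N_Y : n → m be C/E nets with boundaries and let (U, V) be a synchronisation between M and N. Then there exists a finite family {(U_i, V_i)}_{i∈I} of minimal synchronisations such that (i) U_i ∩ U_j = ∅ and V_i ∩ V_j = ∅ whenever i ≠ j, (ii) ⋃_{i∈I} U_i = U, and (iii) ⋃_{i∈I} V_i = V. -/
/-- A C/E net with boundaries `m → n` (contention given as a plain relation;
the well-formedness conditions are collected in `CENet.Valid`). -/
structure CENet (m n : ℕ) : Type 1 where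
  P : Type
  T : Type
  pre : T → Set P
  post : T → Set P
  src : T → Set (Fin m)
  tgt : T → Set (Fin n)
  conten : T → T → Prop

namespace CENet

variable {k l m n : ℕ}

def preS (N : CENet m n) (U : Set N.T) : Set N.P := ⋃ t ∈ U, N.pre t
def postS (N : CENet m n) (U : Set N.T) : Set N.P := ⋃ t ∈ U, N.post t
def srcS (N : CENet m n) (U : Set N.T) : Set (Fin m) := ⋃ t ∈ U, N.src t
def tgtS (N : CENet m n) (U : Set N.T) : Set (Fin n) := ⋃ t ∈ U, N.tgt t

/-- A set of transitions is mutually independent when no two distinct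
members are in contention. -/
def MutInd (N : CENet m n) (U : Set N.T) : Prop :=
  ∀ t ∈ U, ∀ u ∈ U, t ≠ u → ¬ N.conten t u

/-- Well-formedness of a C/E net with boundaries: finiteness, the contention
relation is symmetric, irreflexive and contains all non-independent pairs and
all pairs sharing a boundary port, and transitions have distinct footprints. -/
def Valid (N : CENet m n) : Prop :=
  Finite N.P ∧ Finite N.T ∧
  (∀ t u : N.T, N.conten t u → N.conten u t) ∧
  (∀ t : N.T, ¬ N.conten t t) ∧
  (∀ t u : N.T, t ≠ u → (N.pre t ∩ N.pre u).Nonempty → N.conten t u) ∧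
  (∀ t u : N.T, t ≠ u → (N.post t ∩ N.post u).Nonempty → N.conten t u) ∧
  (∀ t u : N.T, t ≠ u → (N.src t ∩ N.src u).Nonempty → N.conten t u) ∧
  (∀ t u : N.T, t ≠ u → (N.tgt t ∩ N.tgt u).Nonempty → N.conten t u) ∧
  (∀ t u : N.T, N.pre t = N.pre u → N.post t = N.post u →
     N.src t = N.src u → N.tgt t = N.tgt u → t = u)

/-- C/E firing: `N_X →_U N_Y`. -/
def Fire (N : CENet m n) (X : Set N.P) (U : Set N.T) (Y : Set N.P) : Prop :=
  N.MutInd U ∧ N.preS U ⊆ X ∧ N.postS U ∩ X = ∅ ∧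
    Y = (X \ N.preS U) ∪ N.postS U

/-- Labelled semantics of C/E nets with boundaries (labels as subsets of
ports, i.e. elements of `{0,1}^m` via characteristic functions). -/
def Lts (N : CENet m n) (X : Set N.P) (α : Set (Fin m)) (β : Set (Fin n))
    (Y : Set N.P) : Prop :=
  ∃ U : Set N.T, N.Fire X U Y ∧ α = N.srcS U ∧ β = N.tgtS U

/-- Synchronisation between C/E nets with a common boundary. -/
def Synch (M : CENet l m) (N : CENet m n) (U : Set M.T) (V : Set N.T) : Prop :=
  M.MutInd U ∧ N.MutInd V ∧ ¬(U = ∅ ∧ V = ∅) ∧ M.tgtS U = N.srcS V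

/-- Minimal synchronisation. -/
def MinSynch (M : CENet l m) (N : CENet m n) (U : Set M.T) (V : Set N.T) : Prop :=
  Synch M N U V ∧
    ∀ U' V', Synch M N U' V' → U' ⊆ U → V' ⊆ V → U' = U ∧ V' = V

end CENet

lemma unionS_diff_aux {T γ : Type*} (f : T → Set γ) (conten : T → T → Prop)
    (hc : ∀ t u, t ≠ u → (f t ∩ f u).Nonempty → conten t u)
    {U U' : Set T} (hmi : ∀ t ∈ U, ∀ u ∈ U, t ≠ u → ¬ conten t u) (hsub : U' ⊆ U) :
    (⋃ t ∈ U \ U', f t) = (⋃ t ∈ U, f t) \ (⋃ t ∈ U', f t) := by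
  ext x
  simp only [Set.mem_iUnion, Set.mem_diff, exists_prop]
  constructor
  · rintro ⟨t, ⟨htU, htU'⟩, hx⟩
    refine ⟨⟨t, htU, hx⟩, ?_⟩
    rintro ⟨u, huU', hxu⟩
    rcases eq_or_ne t u with rfl | hne
    · exact htU' huU'
    · exact hmi t htU u (hsub huU') hne (hc t u hne ⟨x, hx, hxu⟩)
  · rintro ⟨⟨t, htU, hx⟩, hn⟩
    exact ⟨t, ⟨htU, fun hmem => hn ⟨t, hmem, hx⟩⟩, hx⟩

lemma inter_empty_of_subsets {α : Type*} {A B s t : Set α}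
    (hs : s ⊆ A) (ht : t ⊆ B \ A) : s ∩ t = ∅ := by
  ext x
  simp only [Set.mem_inter_iff, Set.mem_empty_iff_false, iff_false, not_and]
  intro hxs hxt
  exact (ht hxt).2 (hs hxs)

lemma inter_empty_of_subsets' {α : Type*} {A B s t : Set α}
    (hs : s ⊆ B \ A) (ht : t ⊆ A) : s ∩ t = ∅ := by
  rw [Set.inter_comm]; exact inter_empty_of_subsets ht hs

/-- Lemma `strongTransitionDecomposition`: every
synchronisation between C/E nets with boundaries `M : k → n` and `N : n → m`
decomposes into a finite family of pairwise disjoint minimal synchronisations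
whose unions give back the original synchronisation. -/
theorem stmt0 {k n m : ℕ} (M : CENet k n) (N : CENet n m)
    (hM : M.Valid) (hN : N.Valid)
    (U : Set M.T) (V : Set N.T) (h : CENet.Synch M N U V) :
    ∃ (d : ℕ) (Us : Fin d → Set M.T) (Vs : Fin d → Set N.T),
      (∀ i, CENet.MinSynch M N (Us i) (Vs i)) ∧
      (∀ i j, i ≠ j → Us i ∩ Us j = ∅ ∧ Vs i ∩ Vs j = ∅) ∧
      (⋃ i, Us i) = U ∧ (⋃ i, Vs i) = V := by
  obtain ⟨hMP, hMT, hMsym, hMirr, hMpre, hMpost, hMsrc, hMtgt, hMfoot⟩ := hM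
  obtain ⟨hNP, hNT, hNsym, hNirr, hNpre, hNpost, hNsrc, hNtgt, hNfoot⟩ := hN
  haveI : Finite M.T := hMT
  haveI : Finite N.T := hNT
  suffices H : ∀ c : ℕ, ∀ U : Set M.T, ∀ V : Set N.T,
      U.ncard + V.ncard ≤ c → CENet.Synch M N U V →
      ∃ (d : ℕ) (Us : Fin d → Set M.T) (Vs : Fin d → Set N.T),
        (∀ i, CENet.MinSynch M N (Us i) (Vs i)) ∧
        (∀ i j, i ≠ j → Us i ∩ Us j = ∅ ∧ Vs i ∩ Vs j = ∅) ∧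
        (⋃ i, Us i) = U ∧ (⋃ i, Vs i) = V by
    exact H _ U V le_rfl h
  intro c
  induction c with
  | zero =>
    intro U V hc hS
    have hU : U = ∅ := (Set.ncard_eq_zero (Set.toFinite U)).mp (by omega)
    have hV : V = ∅ := (Set.ncard_eq_zero (Set.toFinite V)).mp (by omega)
    exact absurd ⟨hU, hV⟩ hS.2.2.1
  | succ c ih =>
    intro U V hc hS
    by_cases hmin : CENet.MinSynch M N U V
    · refine ⟨1, fun _ => U, fun _ => V, fun _ => hmin,
        fun i j hij => absurd (Subsingleton.elim i j) hij, Set.iUnion_const U, Set.iUnion_const V⟩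
    · have hex : ∃ U' V', CENet.Synch M N U' V' ∧ U' ⊆ U ∧ V' ⊆ V ∧
          ¬(U' = U ∧ V' = V) := by
        by_contra hco
        push_neg at hco
        exact hmin ⟨hS, fun U' V' hs h1 h2 => hco U' V' hs h1 h2⟩
      obtain ⟨U', V', hS', hU'U, hV'V, hne'⟩ := hex
      set U₂ := U \ U' with hU₂def
      set V₂ := V \ V' with hV₂def
      have hS₂ : CENet.Synch M N U₂ V₂ := by
        refine ⟨fun t ht u hu => hS.1 t ht.1 u hu.1,
          fun t ht u hu => hS.2.1 t ht.1 u hu.1, ?_, ?_⟩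
        · rintro ⟨h1, h2⟩
          exact hne' ⟨Set.Subset.antisymm hU'U (Set.diff_eq_empty.mp h1),
            Set.Subset.antisymm hV'V (Set.diff_eq_empty.mp h2)⟩
        · have e1 : M.tgtS U₂ = M.tgtS U \ M.tgtS U' :=
            unionS_diff_aux M.tgt M.conten hMtgt hS.1 hU'U
          have e2 : N.srcS V₂ = N.srcS V \ N.srcS V' :=
            unionS_diff_aux N.src N.conten hNsrc hS.2.1 hV'V
          rw [e1, e2, hS.2.2.2, hS'.2.2.2]
      have hU'c : U'.ncard ≤ U.ncard := Set.ncard_le_ncard hU'U (Set.toFinite U)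
      have hV'c : V'.ncard ≤ V.ncard := Set.ncard_le_ncard hV'V (Set.toFinite V)
      have hpos : 1 ≤ U'.ncard + V'.ncard := by
        rcases not_and_or.mp hS'.2.2.1 with hne0 | hne0
        · have := (Set.ncard_pos (Set.toFinite U')).mpr
            (Set.nonempty_iff_ne_empty.mpr hne0)
          omega
        · have := (Set.ncard_pos (Set.toFinite V')).mpr
            (Set.nonempty_iff_ne_empty.mpr hne0)
          omega
      have hlt : U'.ncard + V'.ncard < U.ncard + V.ncard := by
        rcases not_and_or.mp hne' with hne0 | hne0
        · have := Set.ncard_lt_ncard (HasSubset.Subset.ssubset_of_ne hU'U hne0)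
            (Set.toFinite U)
          omega
        · have := Set.ncard_lt_ncard (HasSubset.Subset.ssubset_of_ne hV'V hne0)
            (Set.toFinite V)
          omega
      have d1e : U₂.ncard = U.ncard - U'.ncard := Set.ncard_diff hU'U (Set.toFinite U')
      have d2e : V₂.ncard = V.ncard - V'.ncard := Set.ncard_diff hV'V (Set.toFinite V')
      obtain ⟨d1, Us1, Vs1, hmin1, hdis1, hUn1, hVn1⟩ := ih U' V' (by omega) hS'
      obtain ⟨d2, Us2, Vs2, hmin2, hdis2, hUn2, hVn2⟩ := ih U₂ V₂ (by omega) hS₂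
      have hsubU1 : ∀ a, Us1 a ⊆ U' := fun a => hUn1 ▸ Set.subset_iUnion Us1 a
      have hsubU2 : ∀ a, Us2 a ⊆ U₂ := fun a => hUn2 ▸ Set.subset_iUnion Us2 a
      have hsubV1 : ∀ a, Vs1 a ⊆ V' := fun a => hVn1 ▸ Set.subset_iUnion Vs1 a
      have hsubV2 : ∀ a, Vs2 a ⊆ V₂ := fun a => hVn2 ▸ Set.subset_iUnion Vs2 a
      refine ⟨d1 + d2, (Sum.elim Us1 Us2) ∘ finSumFinEquiv.symm,
        (Sum.elim Vs1 Vs2) ∘ finSumFinEquiv.symm, ?_, ?_, ?_, ?_⟩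
      · intro i
        rcases hi : finSumFinEquiv.symm i with a | a <;>
          simp only [Function.comp_apply, hi, Sum.elim_inl, Sum.elim_inr]
        · exact hmin1 a
        · exact hmin2 a
      · intro i j hij
        have hij' : finSumFinEquiv.symm i ≠ finSumFinEquiv.symm j :=
          fun e => hij (finSumFinEquiv.symm.injective e)
        rcases hi : finSumFinEquiv.symm i with a | a <;>
          rcases hj : finSumFinEquiv.symm j with b | b <;>
          simp only [Function.comp_apply, hi, hj, Sum.elim_inl, Sum.elim_inr]
        · have hab : a ≠ b := by rintro rfl; exact hij' (hi.trans hj.symm)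
          exact hdis1 a b hab
        · exact ⟨inter_empty_of_subsets (hsubU1 a) (hsubU2 b),
            inter_empty_of_subsets (hsubV1 a) (hsubV2 b)⟩
        · exact ⟨inter_empty_of_subsets' (hsubU2 a) (hsubU1 b),
            inter_empty_of_subsets' (hsubV2 a) (hsubV1 b)⟩
        · have hab : a ≠ b := by rintro rfl; exact hij' (hi.trans hj.symm)
          exact hdis2 a b hab
      · have hre : (⋃ i, (Sum.elim Us1 Us2 ∘ finSumFinEquiv.symm) i)
            = ⋃ s, Sum.elim Us1 Us2 s :=
          finSumFinEquiv.symm.surjective.iSup_comp _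
        rw [hre, Set.iUnion_sum]
        simp only [Sum.elim_inl, Sum.elim_inr]
        rw [hUn1, hUn2, Set.union_diff_cancel hU'U]
      · have hre : (⋃ i, (Sum.elim Vs1 Vs2 ∘ finSumFinEquiv.symm) i)
            = ⋃ s, Sum.elim Vs1 Vs2 s :=
          finSumFinEquiv.symm.surjective.iSup_comp _
        rw [hre, Set.iUnion_sum]
        simp only [Sum.elim_inl, Sum.elim_inr]
        rw [hVn1, hVn2, Set.union_diff_cancel hV'V]
end

section
/- For any P/T nets with boundaries M : l → m and N : m → n, the set Synch(M, N) of minimal synchronisations between M and N is finite. -/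
/-!
Minimal synchronisations form an antichain for the componentwise inclusion order on pairs of
multisets of transitions. Since both nets have finitely many transitions, multisets of transitions
are well-quasi-ordered by inclusion (Dickson's lemma), and so is their product; antichains in a
well-quasi-order are finite.
-/

/-- A P/T net with boundaries `m → n` (well-formedness in `PTNet.Valid`). -/
structure PTNet (m n : ℕ) : Type 1 where
  P : Type
  T : Type
  pre : T → Multiset P
  post : T → Multiset P
  src : T → Multiset (Fin m)
  tgt : T → Multiset (Fin n)

namespace PTNet

variable {k l m n : ℕ}

/-- Linear extension of `pre` to multisets of transitions. -/
def preM (N : PTNet m n) (U : Multiset N.T) : Multiset N.P := (U.map N.pre).sum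
def postM (N : PTNet m n) (U : Multiset N.T) : Multiset N.P := (U.map N.post).sum
def srcM (N : PTNet m n) (U : Multiset N.T) : Multiset (Fin m) := (U.map N.src).sum
def tgtM (N : PTNet m n) (U : Multiset N.T) : Multiset (Fin n) := (U.map N.tgt).sum

/-- Well-formedness: finiteness and distinct footprints. -/
def Valid (N : PTNet m n) : Prop :=
  Finite N.P ∧ Finite N.T ∧
  ∀ t u : N.T, N.pre t = N.pre u → N.post t = N.post u →
    N.src t = N.src u → N.tgt t = N.tgt u → t = u

/-- Strong firing of P/T nets: `N_X →_U N_Y`. -/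
def SFire (N : PTNet m n) (X : Multiset N.P) (U : Multiset N.T)
    (Y : Multiset N.P) : Prop :=
  letI := Classical.decEq N.P
  N.preM U ≤ X ∧ N.postM U ≤ Y ∧ X - N.preM U = Y - N.postM U

/-- Weak (banking) firing of P/T nets: `N_X ⇒_U N_Y`. -/
def WFire (N : PTNet m n) (X : Multiset N.P) (U : Multiset N.T)
    (Y : Multiset N.P) : Prop :=
  Y + N.preM U = X + N.postM U

/-- Characteristic function `χ : Multiset (Fin k) → ℕ^k`. -/
def chiM {k : ℕ} (M : Multiset (Fin k)) : Fin k → ℕ := fun i => M.count i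

/-- Strong labelled semantics of P/T nets with boundaries. -/
def SLts (N : PTNet m n) (X : Multiset N.P) (α : Fin m → ℕ) (β : Fin n → ℕ)
    (Y : Multiset N.P) : Prop :=
  ∃ U : Multiset N.T, N.SFire X U Y ∧ α = chiM (N.srcM U) ∧ β = chiM (N.tgtM U)

/-- Weak labelled semantics of P/T nets with boundaries. -/
def WLts (N : PTNet m n) (X : Multiset N.P) (α : Fin m → ℕ) (β : Fin n → ℕ)
    (Y : Multiset N.P) : Prop :=
  ∃ U : Multiset N.T, N.WFire X U Y ∧ α = chiM (N.srcM U) ∧ β = chiM (N.tgtM U)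

/-- Synchronisation between P/T nets with a common boundary. -/
def Synch (M : PTNet l m) (N : PTNet m n) (U : Multiset M.T)
    (V : Multiset N.T) : Prop :=
  ¬(U = 0 ∧ V = 0) ∧ M.tgtM U = N.srcM V

/-- Minimal synchronisation. -/
def MinSynch (M : PTNet l m) (N : PTNet m n) (U : Multiset M.T)
    (V : Multiset N.T) : Prop :=
  Synch M N U V ∧
    ∀ U' V', Synch M N U' V' → U' ≤ U → V' ≤ V → U' = U ∧ V' = V

end PTNet

instance Multiset.wellQuasiOrderedLE {α : Type*} [Finite α] : WellQuasiOrderedLE (Multiset α) := by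
  classical
  exact Finsupp.orderIsoMultiset.wellQuasiOrderedLE_iff.1 inferInstance

namespace PTNet

theorem minSynch_iff_minimal {l m n : ℕ} (M : PTNet l m) (N : PTNet m n) (U : Multiset M.T)
    (V : Multiset N.T) :
    MinSynch M N U V ↔ Minimal (fun p : Multiset M.T × Multiset N.T ↦ Synch M N p.1 p.2) (U, V) := by
  refine and_congr_right fun _ ↦ ⟨fun h p hp hle ↦ ?_, fun h U' V' hs hU hV ↦ ?_⟩
  · obtain ⟨rfl, rfl⟩ := h p.1 p.2 hp hle.1 hle.2
    exact le_rfl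
  · have hge := h (y := (U', V')) hs ⟨hU, hV⟩
    exact ⟨le_antisymm hU hge.1, le_antisymm hV hge.2⟩

theorem isAntichain_minSynch {l m n : ℕ} (M : PTNet l m) (N : PTNet m n) :
    IsAntichain (· ≤ ·) {p : Multiset M.T × Multiset N.T | MinSynch M N p.1 p.2} := by
  simpa only [minSynch_iff_minimal] using
    setOfPred_minimal_antichain fun p : Multiset M.T × Multiset N.T ↦ Synch M N p.1 p.2

end PTNet

/-- for any P/T nets with boundaries `M : l → m` and
`N : m → n`, the set of minimal synchronisations `Synch(M,N)` is finite. -/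
theorem stmt3 {l m n : ℕ} (M : PTNet l m) (N : PTNet m n)
    (hM : M.Valid) (hN : N.Valid) :
    Set.Finite {p : Multiset M.T × Multiset N.T | PTNet.MinSynch M N p.1 p.2} := by
  have : Finite M.T := hM.2.1
  have : Finite N.T := hN.2.1
  exact WellQuasiOrderedLE.finite_of_isAntichain (PTNet.isAntichain_minSynch M N)
end

section
/- Let M_X : l → m and N_Y : m → n be P/T nets with boundaries and let (U, V) be a synchronisation. Then there exists a finite family {(b_i, (U_i, V_i))}_{i∈I} where each b_i is a positive natural number, each (U_i, V_i) ∈ Synch(M, N), and the pairs (U_i, V_i) are pairwise distinct (i.e., (U_i,V_i) = (U_j,V_j) implies i = j), such that Σ_{i∈I} b_i·U_i = U and Σ_{i∈I} b_i·V_i = V. -/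
lemma tgtM_add {m n : ℕ} (N : PTNet m n) (A B : Multiset N.T) :
    N.tgtM (A + B) = N.tgtM A + N.tgtM B := by
  simp [PTNet.tgtM]

lemma srcM_add {m n : ℕ} (N : PTNet m n) (A B : Multiset N.T) :
    N.srcM (A + B) = N.srcM A + N.srcM B := by
  simp [PTNet.srcM]

lemma synch_decomp_multiset {l m n : ℕ} (M : PTNet l m) (N : PTNet m n) :
    ∀ c : ℕ, ∀ (U : Multiset M.T) (V : Multiset N.T),
      Multiset.card U + Multiset.card V = c → PTNet.Synch M N U V →
      ∃ S : Multiset (Multiset M.T × Multiset N.T),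
        (∀ p ∈ S, PTNet.MinSynch M N p.1 p.2) ∧
        (S.map Prod.fst).sum = U ∧ (S.map Prod.snd).sum = V := by
  classical
  intro c
  induction c using Nat.strong_induction_on with
  | _ c ih =>
    intro U V hc h
    by_cases hmin : PTNet.MinSynch M N U V
    · exact ⟨{(U, V)}, by simpa using hmin, by simp, by simp⟩
    · rw [PTNet.MinSynch, not_and] at hmin
      have := hmin h
      push_neg at this
      obtain ⟨U', V', hs', hUle, hVle, hne⟩ := this
      -- the complement is also a synchronisation
      have hUeq : U' + (U - U') = U := add_tsub_cancel_of_le hUle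
      have hVeq : V' + (V - V') = V := add_tsub_cancel_of_le hVle
      have htgt : M.tgtM (U - U') = N.srcM (V - V') := by
        have h1 : M.tgtM U' + M.tgtM (U - U') = N.srcM V' + N.srcM (V - V') := by
          rw [← tgtM_add, ← srcM_add, hUeq, hVeq]; exact h.2
        rw [hs'.2] at h1
        exact add_left_cancel h1
      have hcomp : PTNet.Synch M N (U - U') (V - V') := by
        refine ⟨?_, htgt⟩
        rintro ⟨h1, h2⟩
        have hU' : U' = U := by rw [← hUeq, h1, add_zero]
        have hV' : V' = V := by rw [← hVeq, h2, add_zero]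
        exact hne hU' hV'
      -- cardinality bookkeeping
      have hcardU : Multiset.card U' + Multiset.card (U - U') = Multiset.card U := by
        rw [← Multiset.card_add, hUeq]
      have hcardV : Multiset.card V' + Multiset.card (V - V') = Multiset.card V := by
        rw [← Multiset.card_add, hVeq]
      have hpos1 : 0 < Multiset.card U' + Multiset.card V' := by
        have hor : U' ≠ 0 ∨ V' ≠ 0 := by
          by_contra hh; push_neg at hh; exact hs'.1 ⟨hh.1, hh.2⟩
        rcases hor with h' | h'
        · have := Multiset.card_pos.2 h'; omega
        · have := Multiset.card_pos.2 h'; omega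
      have hpos2 : 0 < Multiset.card (U - U') + Multiset.card (V - V') := by
        have hor : U - U' ≠ 0 ∨ V - V' ≠ 0 := by
          by_contra hh; push_neg at hh; exact hcomp.1 ⟨hh.1, hh.2⟩
        rcases hor with h' | h'
        · have := Multiset.card_pos.2 h'; omega
        · have := Multiset.card_pos.2 h'; omega
      have htot : (Multiset.card U' + Multiset.card V')
          + (Multiset.card (U - U') + Multiset.card (V - V')) = c := by omega
      obtain ⟨S1, hS1min, hS1U, hS1V⟩ :=
        ih (Multiset.card U' + Multiset.card V') (by omega) U' V' rfl hs'
      obtain ⟨S2, hS2min, hS2U, hS2V⟩ :=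
        ih (Multiset.card (U - U') + Multiset.card (V - V')) (by omega)
          (U - U') (V - V') rfl hcomp
      refine ⟨S1 + S2, ?_, ?_, ?_⟩
      · intro p hp
        rcases Multiset.mem_add.1 hp with hp | hp
        · exact hS1min p hp
        · exact hS2min p hp
      · rw [Multiset.map_add, Multiset.sum_add, hS1U, hS2U, hUeq]
      · rw [Multiset.map_add, Multiset.sum_add, hS1V, hS2V, hVeq]

/-- Lemma `weakTransitionDecomposition`: every
synchronisation between P/T nets with boundaries can be written as a linear
combination (with positive coefficients) of pairwise distinct minimal
synchronisations. -/
theorem stmt4 {l m n : ℕ} (M : PTNet l m) (N : PTNet m n)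
    (hM : M.Valid) (hN : N.Valid)
    (U : Multiset M.T) (V : Multiset N.T) (h : PTNet.Synch M N U V) :
    ∃ (d : ℕ) (b : Fin d → ℕ) (Us : Fin d → Multiset M.T)
      (Vs : Fin d → Multiset N.T),
      (∀ i, 0 < b i) ∧
      (∀ i, PTNet.MinSynch M N (Us i) (Vs i)) ∧
      (∀ i j, Us i = Us j → Vs i = Vs j → i = j) ∧
      (∑ i, b i • Us i) = U ∧ (∑ i, b i • Vs i) = V := by
  classical
  obtain ⟨S, hmin, hU, hV⟩ :=
    synch_decomp_multiset M N (Multiset.card U + Multiset.card V) U V rfl h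
  set F := S.toFinset with hF
  refine ⟨F.card, fun i => S.count (F.equivFin.symm i).val,
    fun i => (F.equivFin.symm i).val.1,
    fun i => (F.equivFin.symm i).val.2, ?_, ?_, ?_, ?_, ?_⟩
  · intro i
    exact Multiset.count_pos.2 (Multiset.mem_toFinset.1 (F.equivFin.symm i).2)
  · intro i
    exact hmin _ (Multiset.mem_toFinset.1 (F.equivFin.symm i).2)
  · intro i j h1 h2
    have : (F.equivFin.symm i).val = (F.equivFin.symm j).val := Prod.ext h1 h2
    have := Subtype.ext this
    exact F.equivFin.symm.injective this
  · rw [← hU, Finset.sum_multiset_map_count]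
    rw [← Finset.sum_coe_sort F (fun x => S.count x • x.1)]
    exact Fintype.sum_equiv F.equivFin.symm _ _ (fun i => rfl)
  · rw [← hV, Finset.sum_multiset_map_count]
    rw [← Finset.sum_coe_sort F (fun x => S.count x • x.2)]
    exact Fintype.sum_equiv F.equivFin.symm _ _ (fun i => rfl)
end

section
/- Let M : k → n and N : n → m be P/T nets with boundaries, and let X, X' ∈ Multiset(P_M) and Y, Y' ∈ Multiset(P_N) be markings. Then (M;N)_{X+Y} −α/β→ (M;N)_{X'+Y'} under the strong labelled semantics if and only if there exists γ ∈ ℕ^n such that M_X −α/γ→ M_{X'} and N_Y −γ/β→ N_{Y'}. -/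
namespace PTNet

variable {k l m n : ℕ}

/-- Footprints of transitions of the composite P/T net. -/
def FootprintPT (M : PTNet l m) (N : PTNet m n) : Type :=
  Multiset (M.P ⊕ N.P) × Multiset (M.P ⊕ N.P) × Multiset (Fin l) × Multiset (Fin n)

def footOf (M : PTNet l m) (N : PTNet m n) (U : Multiset M.T) (V : Multiset N.T) :
    FootprintPT M N :=
  ((M.preM U).map Sum.inl + (N.preM V).map Sum.inr,
   (M.postM U).map Sum.inl + (N.postM V).map Sum.inr,
   M.srcM U, N.tgtM V)

/-- Combined marking on a disjoint union of places. -/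
def mmk {A B : Type} (X : Multiset A) (Y : Multiset B) : Multiset (A ⊕ B) :=
  X.map Sum.inl + Y.map Sum.inr

/-- Composition of P/T nets with boundaries along a common boundary. -/
def comp (M : PTNet l m) (N : PTNet m n) : PTNet l n where
  P := M.P ⊕ N.P
  T := {fp : FootprintPT M N // ∃ U V, MinSynch M N U V ∧ footOf M N U V = fp}
  pre t := t.1.1
  post t := t.1.2.1
  src t := t.1.2.2.1
  tgt t := t.1.2.2.2

end PTNet

/-! A transition of `M;N` is (the footprint of) a minimal synchronisation `(U, V)`, so any
multiset of them has the footprint of a synchronised pair of multisets, with `tgt U = src V`.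
Conversely every synchronised pair splits into minimal synchronisations, by well-founded
induction on pairs of multisets. Since the places of `M;N` are the disjoint union, strong firing
of such a pair splits into strong firing of `U` in `M` and of `V` in `N`, and the shared
boundary label is `γ = χ (tgt U) = χ (src V)`. -/

theorem tsub_eq_tsub_iff_add_eq_add {α : Type*} [AddCommMonoid α] [PartialOrder α]
    [ExistsAddOfLE α] [AddLeftMono α] [AddLeftReflectLE α] [Sub α] [OrderedSub α]
    {a b c d : α} (hb : b ≤ a) (hd : d ≤ c) :
    a - b = c - d ↔ a + d = c + b := by
  refine ⟨fun h => ?_, tsub_eq_tsub_of_add_eq_add⟩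
  calc a + d = a - b + b + d := by rw [tsub_add_cancel_of_le hb]
    _ = c - d + d + b := by rw [h, add_right_comm]
    _ = c + b := by rw [tsub_add_cancel_of_le hd]

namespace PTNet

variable {l m n : ℕ}

section Linearity

variable (N : PTNet m n) (U V : Multiset N.T) (t : N.T)

@[simp] lemma preM_add : N.preM (U + V) = N.preM U + N.preM V := by simp [preM]
@[simp] lemma postM_add : N.postM (U + V) = N.postM U + N.postM V := by simp [postM]
@[simp] lemma srcM_add : N.srcM (U + V) = N.srcM U + N.srcM V := by simp [srcM]
@[simp] lemma tgtM_add : N.tgtM (U + V) = N.tgtM U + N.tgtM V := by simp [tgtM]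

@[simp] lemma preM_singleton : N.preM {t} = N.pre t := by simp [preM]
@[simp] lemma postM_singleton : N.postM {t} = N.post t := by simp [postM]
@[simp] lemma srcM_singleton : N.srcM {t} = N.src t := by simp [srcM]
@[simp] lemma tgtM_singleton : N.tgtM {t} = N.tgt t := by simp [tgtM]

end Linearity

lemma chiM_injective {j : ℕ} : Function.Injective (chiM : Multiset (Fin j) → Fin j → ℕ) :=
  fun _ _ h => Multiset.ext' (congrFun h)

section Mmk

variable {A B : Type} {a c : Multiset A} {b d : Multiset B}

lemma mmk_add : mmk a b + mmk c d = mmk (a + c) (b + d) := by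
  simp only [mmk, Multiset.map_add]
  abel

@[simp] lemma count_mmk_inl [DecidableEq A] [DecidableEq B] (x : A) :
    (mmk a b).count (Sum.inl x) = a.count x := by
  simp [mmk, Multiset.count_map_eq_count' _ _ Sum.inl_injective]

@[simp] lemma count_mmk_inr [DecidableEq A] [DecidableEq B] (y : B) :
    (mmk a b).count (Sum.inr y) = b.count y := by
  simp [mmk, Multiset.count_map_eq_count' _ _ Sum.inr_injective]

lemma mmk_le_mmk_iff : mmk a b ≤ mmk c d ↔ a ≤ c ∧ b ≤ d := by
  classical
  simp only [Multiset.le_iff_count, Sum.forall, count_mmk_inl, count_mmk_inr]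

lemma mmk_eq_mmk_iff : mmk a b = mmk c d ↔ a = c ∧ b = d := by
  classical
  simp only [Multiset.ext, Sum.forall, count_mmk_inl, count_mmk_inr]

lemma mmk_le_add_eq_add_iff {a a' X X' : Multiset A} {b b' Y Y' : Multiset B} :
    (mmk a b ≤ mmk X Y ∧ mmk a' b' ≤ mmk X' Y' ∧ mmk X Y + mmk a' b' = mmk X' Y' + mmk a b) ↔
      (a ≤ X ∧ a' ≤ X' ∧ X + a' = X' + a) ∧ (b ≤ Y ∧ b' ≤ Y' ∧ Y + b' = Y' + b) := by
  simp only [mmk_le_mmk_iff, mmk_add, mmk_eq_mmk_iff]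
  tauto

end Mmk

lemma sFire_iff_add_eq_add (N : PTNet m n) (X Y : Multiset N.P) (U : Multiset N.T) :
    N.SFire X U Y ↔ N.preM U ≤ X ∧ N.postM U ≤ Y ∧ X + N.postM U = Y + N.preM U := by
  classical
  unfold SFire
  exact and_congr_right fun hpre => and_congr_right fun hpost =>
    tsub_eq_tsub_iff_add_eq_add hpre hpost

lemma minSynch_of_minimal {M : PTNet l m} {N : PTNet m n} {U : Multiset M.T} {V : Multiset N.T}
    (h : Minimal (fun p : Multiset M.T × Multiset N.T => Synch M N p.1 p.2) (U, V)) :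
    MinSynch M N U V :=
  ⟨h.prop, fun U' V' hs hU hV =>
    have hle : ((U', V') : Multiset M.T × Multiset N.T) ≤ (U, V) := Prod.mk_le_mk.2 ⟨hU, hV⟩
    Prod.ext_iff.mp (le_antisymm hle (h.le_of_le hs hle))⟩

section Composition

variable {M : PTNet l m} {N : PTNet m n}

structure Realises (W : Multiset (M.comp N).T) (U : Multiset M.T) (V : Multiset N.T) : Prop where
  sync : M.tgtM U = N.srcM V
  pre : (M.comp N).preM W = mmk (M.preM U) (N.preM V)
  post : (M.comp N).postM W = mmk (M.postM U) (N.postM V)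
  src : (M.comp N).srcM W = M.srcM U
  tgt : (M.comp N).tgtM W = N.tgtM V

lemma realises_zero : Realises (0 : Multiset (M.comp N).T) 0 0 :=
  ⟨rfl, rfl, rfl, rfl, rfl⟩

lemma Realises.add {W W' : Multiset (M.comp N).T} {U U' : Multiset M.T} {V V' : Multiset N.T}
    (h : Realises W U V) (h' : Realises W' U' V') : Realises (W + W') (U + U') (V + V') where
  sync := by rw [tgtM_add, srcM_add, h.sync, h'.sync]
  pre := by rw [preM_add, preM_add, preM_add, h.pre, h'.pre]; exact mmk_add
  post := by rw [postM_add, postM_add, postM_add, h.post, h'.post]; exact mmk_add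
  src := by rw [srcM_add, srcM_add, h.src, h'.src]
  tgt := by rw [tgtM_add, tgtM_add, h.tgt, h'.tgt]

lemma realises_singleton_mk {U : Multiset M.T} {V : Multiset N.T} (h : MinSynch M N U V) :
    Realises ({⟨footOf M N U V, U, V, h, rfl⟩} : Multiset (M.comp N).T) U V where
  sync := h.1.2
  pre := preM_singleton _ _
  post := postM_singleton _ _
  src := srcM_singleton _ _
  tgt := tgtM_singleton _ _

lemma exists_realises (W : Multiset (M.comp N).T) : ∃ U V, Realises W U V := by
  induction W using Multiset.induction with
  | empty => exact ⟨0, 0, realises_zero⟩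
  | cons t W ih =>
    obtain ⟨_, Ut, Vt, ht, rfl⟩ := t
    obtain ⟨U, V, hW⟩ := ih
    exact ⟨Ut + U, Vt + V, (realises_singleton_mk ht).add hW⟩

lemma exists_realises_of_tgtM_eq_srcM {U : Multiset M.T} {V : Multiset N.T}
    (hsync : M.tgtM U = N.srcM V) : ∃ W, Realises W U V := by
  induction h : (U, V) using WellFoundedLT.induction generalizing U V with
  | ind p ih =>
    classical
    subst h
    by_cases h0 : U = 0 ∧ V = 0
    · obtain ⟨rfl, rfl⟩ := h0
      exact ⟨0, realises_zero⟩
    obtain ⟨⟨U₀, V₀⟩, hle, hmin⟩ := exists_minimal_le_of_wellFoundedLT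
      (fun p : Multiset M.T × Multiset N.T => Synch M N p.1 p.2) (U, V) ⟨h0, hsync⟩
    obtain ⟨hU₀, hV₀⟩ := Prod.mk_le_mk.1 hle
    have hrest : M.tgtM (U - U₀) = N.srcM (V - V₀) := by
      apply add_left_cancel (a := M.tgtM U₀)
      rw [← tgtM_add, add_tsub_cancel_of_le hU₀, hsync, hmin.prop.2, ← srcM_add,
        add_tsub_cancel_of_le hV₀]
    have hlt : (U - U₀, V - V₀) < (U, V) := by
      rcases not_and_or.mp hmin.prop.1 with hU | hV
      · exact Prod.lt_iff.2 <| Or.inl ⟨(lt_add_of_pos_left _ (pos_iff_ne_zero.2 hU)).trans_eq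
          (add_tsub_cancel_of_le hU₀), tsub_le_self⟩
      · exact Prod.lt_iff.2 <| Or.inr ⟨tsub_le_self,
          (lt_add_of_pos_left _ (pos_iff_ne_zero.2 hV)).trans_eq (add_tsub_cancel_of_le hV₀)⟩
    obtain ⟨W, hW⟩ := ih _ hlt hrest rfl
    have hsplit := (realises_singleton_mk (minSynch_of_minimal hmin)).add hW
    rw [add_tsub_cancel_of_le hU₀, add_tsub_cancel_of_le hV₀] at hsplit
    exact ⟨_, hsplit⟩

lemma Realises.sFire_iff {W : Multiset (M.comp N).T} {U : Multiset M.T} {V : Multiset N.T}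
    (h : Realises W U V) (X X' : Multiset M.P) (Y Y' : Multiset N.P) :
    (M.comp N).SFire (mmk X Y) W (mmk X' Y') ↔ M.SFire X U X' ∧ N.SFire Y V Y' := by
  -- The places of `M.comp N` are `M.P ⊕ N.P` only after unfolding `comp`, so the multiset
  -- lemma is applied with `exact` rather than rewritten with.
  refine ((M.comp N).sFire_iff_add_eq_add (mmk X Y) (mmk X' Y') W).trans ?_
  rw [h.pre, h.post, sFire_iff_add_eq_add, sFire_iff_add_eq_add]
  exact mmk_le_add_eq_add_iff

end Composition

end PTNet

theorem stmt5_general {k n m : ℕ} (M : PTNet k n) (N : PTNet n m)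
    (X X' : Multiset M.P) (Y Y' : Multiset N.P)
    (α : Fin k → ℕ) (β : Fin m → ℕ) :
    (M.comp N).SLts (PTNet.mmk X Y) α β (PTNet.mmk X' Y') ↔
      ∃ γ : Fin n → ℕ, M.SLts X α γ X' ∧ N.SLts Y γ β Y' := by
  constructor
  · rintro ⟨W, hfire, rfl, rfl⟩
    obtain ⟨U, V, hW⟩ := PTNet.exists_realises W
    obtain ⟨hU, hV⟩ := (hW.sFire_iff X X' Y Y').1 hfire
    exact ⟨PTNet.chiM (M.tgtM U), ⟨U, hU, by rw [hW.src], rfl⟩,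
      ⟨V, hV, by rw [hW.sync], by rw [hW.tgt]⟩⟩
  · rintro ⟨γ, ⟨U, hU, rfl, rfl⟩, ⟨V, hV, hγ, rfl⟩⟩
    obtain ⟨W, hW⟩ := PTNet.exists_realises_of_tgtM_eq_srcM (PTNet.chiM_injective hγ)
    exact ⟨W, (hW.sFire_iff X X' Y Y').2 ⟨hU, hV⟩, by rw [hW.src], by rw [hW.tgt]⟩

/-- Theorem `ptnetdecomposition` (i): the strong labelled
semantics of the composite P/T net `M;N` decomposes. -/
theorem stmt5 {k n m : ℕ} (M : PTNet k n) (N : PTNet n m)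
    (hM : M.Valid) (hN : N.Valid)
    (X X' : Multiset M.P) (Y Y' : Multiset N.P)
    (α : Fin k → ℕ) (β : Fin m → ℕ) :
    (M.comp N).SLts (PTNet.mmk X Y) α β (PTNet.mmk X' Y') ↔
      ∃ γ : Fin n → ℕ, M.SLts X α γ X' ∧ N.SLts Y γ β Y' :=
  stmt5_general M N X X' Y Y' α β
end

section
/- In the weak semantics of the Petri calculus: (i) if P;R ⇒α/β Q then there exist terms P', R' and a label γ such that Q = P';R', P ⇒α/γ P' and R ⇒γ/β R'; (ii) if P⊗R ⇒α/β Q then there exist terms P', R' such that Q = P'⊗R', P ⇒α₁/β₁ P' and R ⇒α₂/β₂ R' with α = α₁α₂ and β = β₁β₂ (concatenation of words). -/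
/-- Syntax of the Petri calculus. -/
inductive PTerm : Type
  | empty               -- ○ (empty one-place buffer)
  | full                -- ● (full one-place buffer)
  | iden                -- I
  | tw                  -- X
  | diag                -- Δ
  | codiag              -- ∇
  | bot                 -- ⊥
  | top                 -- ⊤
  | lam                 -- Λ
  | vee                 -- V
  | down                -- ↓
  | up                  -- ↑
  | tens (P Q : PTerm)  -- ⊗
  | seq (P Q : PTerm)   -- ;
  deriving DecidableEq

namespace PTerm

/-- Sorting discipline of the Petri calculus. -/
inductive HasSort : PTerm → ℕ → ℕ → Prop
  | empty : HasSort .empty 1 1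
  | full : HasSort .full 1 1
  | iden : HasSort .iden 1 1
  | tw : HasSort .tw 2 2
  | diag : HasSort .diag 1 2
  | codiag : HasSort .codiag 2 1
  | bot : HasSort .bot 1 0
  | top : HasSort .top 0 1
  | lam : HasSort .lam 1 2
  | vee : HasSort .vee 2 1
  | down : HasSort .down 1 0
  | up : HasSort .up 0 1
  | tens {P Q : PTerm} {k l m n : ℕ} :
      HasSort P k l → HasSort Q m n → HasSort (.tens P Q) (k + m) (l + n)
  | seq {P Q : PTerm} {k n l : ℕ} :
      HasSort P k n → HasSort Q n l → HasSort (.seq P Q) k l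

/-- Basic connectors are the constants of the calculus. -/
def IsBasic : PTerm → Prop
  | .tens _ _ => False
  | .seq _ _ => False
  | _ => True

/-- Stateless terms contain no buffers ○, ●. -/
def Stateless : PTerm → Prop
  | .empty => False
  | .full => False
  | .tens P Q => Stateless P ∧ Stateless Q
  | .seq P Q => Stateless P ∧ Stateless Q
  | _ => True

/-- Strong operational semantics of the Petri calculus.  Labels are words
over ℕ (the rules only produce entries in {0,1}). -/
inductive Step : PTerm → List ℕ → List ℕ → PTerm → Prop
  | tkI : Step .empty [1] [0] .full
  | tkO : Step .full [0] [1] .empty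
  | iden : Step .iden [1] [1] .iden
  | tw {a b : ℕ} : a ≤ 1 → b ≤ 1 → Step .tw [a, b] [b, a] .tw
  | bot : Step .bot [1] [] .bot
  | top : Step .top [] [1] .top
  | diag : Step .diag [1] [1, 1] .diag
  | codiag : Step .codiag [1, 1] [1] .codiag
  | lam {a : ℕ} : a ≤ 1 → Step .lam [1] [1 - a, a] .lam
  | vee {a : ℕ} : a ≤ 1 → Step .vee [1 - a, a] [1] .vee
  | refl {C : PTerm} {k l : ℕ} : IsBasic C → HasSort C k l →
      Step C (List.replicate k 0) (List.replicate l 0) C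
  | cut {P Q R S : PTerm} {α β γ : List ℕ} :
      Step P α γ Q → Step R γ β S → Step (.seq P R) α β (.seq Q S)
  | ten {P Q R S : PTerm} {α₁ α₂ β₁ β₂ : List ℕ} :
      Step P α₁ β₁ Q → Step R α₂ β₂ S →
      Step (.tens P R) (α₁ ++ α₂) (β₁ ++ β₂) (.tens Q S)

/-- Weak operational semantics of the Petri calculus: the same rules plus the
rule (Weak) composing consecutive steps by pointwise addition of labels. -/
inductive Weak : PTerm → List ℕ → List ℕ → PTerm → Prop
  | tkI : Weak .empty [1] [0] .full
  | tkO : Weak .full [0] [1] .empty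
  | iden : Weak .iden [1] [1] .iden
  | tw {a b : ℕ} : a ≤ 1 → b ≤ 1 → Weak .tw [a, b] [b, a] .tw
  | bot : Weak .bot [1] [] .bot
  | top : Weak .top [] [1] .top
  | diag : Weak .diag [1] [1, 1] .diag
  | codiag : Weak .codiag [1, 1] [1] .codiag
  | lam {a : ℕ} : a ≤ 1 → Weak .lam [1] [1 - a, a] .lam
  | vee {a : ℕ} : a ≤ 1 → Weak .vee [1 - a, a] [1] .vee
  | refl {C : PTerm} {k l : ℕ} : IsBasic C → HasSort C k l →
      Weak C (List.replicate k 0) (List.replicate l 0) C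
  | cut {P Q R S : PTerm} {α β γ : List ℕ} :
      Weak P α γ Q → Weak R γ β S → Weak (.seq P R) α β (.seq Q S)
  | ten {P Q R S : PTerm} {α₁ α₂ β₁ β₂ : List ℕ} :
      Weak P α₁ β₁ Q → Weak R α₂ β₂ S →
      Weak (.tens P R) (α₁ ++ α₂) (β₁ ++ β₂) (.tens Q S)
  | weak {P R Q : PTerm} {α₁ α₂ β₁ β₂ : List ℕ} :
      Weak P α₁ β₁ R → Weak R α₂ β₂ Q →
      Weak P (List.zipWith (· + ·) α₁ α₂) (List.zipWith (· + ·) β₁ β₂) Q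

/-! Induct on the derivation of the weak transition: only (Cut), (Ten) and (Weak) can conclude a
transition of a composite term, and in the (Weak) case the two decompositions given by induction
are recombined componentwise. For `⊗` the pointwise sum of `α₁ ++ α₂` and `α₁' ++ α₂'` splits as
needed because `α₁` and `α₁'` have the same length: every weak transition `P ⇒α/β P'` sorts `P`
and `P'` as `(|α|, |β|)`, and a term has at most one sort. -/

theorem HasSort.unique {P : PTerm} {k l k' l' : ℕ} (h : HasSort P k l) (h' : HasSort P k' l') :
    k = k' ∧ l = l' := by
  induction h generalizing k' l' with
  | tens _ _ ihP ihQ =>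
    cases h' with
    | tens hP hQ => obtain ⟨rfl, rfl⟩ := ihP hP; obtain ⟨rfl, rfl⟩ := ihQ hQ; exact ⟨rfl, rfl⟩
  | seq _ _ ihP ihQ =>
    cases h' with
    | seq hP hQ => obtain ⟨rfl, rfl⟩ := ihP hP; exact ⟨rfl, (ihQ hQ).2⟩
  | _ => cases h'; exact ⟨rfl, rfl⟩

theorem Weak.hasSort {P Q : PTerm} {α β : List ℕ} (h : Weak P α β Q) :
    HasSort P α.length β.length ∧ HasSort Q α.length β.length := by
  induction h with
  | refl _ hs => simpa using And.intro hs hs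
  | cut _ _ ihP ihR => exact ⟨ihP.1.seq ihR.1, ihP.2.seq ihR.2⟩
  | ten _ _ ihP ihR =>
    simpa only [List.length_append] using And.intro (ihP.1.tens ihR.1) (ihP.2.tens ihR.2)
  | weak _ _ ih₁ ih₂ =>
    obtain ⟨hα, hβ⟩ := ih₁.2.unique ih₂.1
    simpa only [List.length_zipWith, hα, hβ, min_self] using And.intro (hα ▸ hβ ▸ ih₁.1) ih₂.2
  | _ => exact ⟨by constructor, by constructor⟩

theorem Weak.length_eq_of_comp {P R Q : PTerm} {α₁ α₂ β₁ β₂ : List ℕ} (h₁ : Weak P α₁ β₁ R)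
    (h₂ : Weak R α₂ β₂ Q) : α₁.length = α₂.length ∧ β₁.length = β₂.length :=
  h₁.hasSort.2.unique h₂.hasSort.1

theorem Weak.exists_of_seq {P R Q : PTerm} {α β : List ℕ} (h : Weak (.seq P R) α β Q) :
    ∃ (P' R' : PTerm) (γ : List ℕ), Q = .seq P' R' ∧ Weak P α γ P' ∧ Weak R γ β R' := by
  generalize hT : seq P R = T at h
  induction h generalizing P R with
  | refl hb _ => subst hT; exact hb.elim
  | cut hP hR => cases hT; exact ⟨_, _, _, rfl, hP, hR⟩
  | weak _ _ ih₁ ih₂ =>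
    obtain ⟨P₁, R₁, γ₁, rfl, hP₁, hR₁⟩ := ih₁ hT
    obtain ⟨P₂, R₂, γ₂, rfl, hP₂, hR₂⟩ := ih₂ rfl
    exact ⟨P₂, R₂, _, rfl, hP₁.weak hP₂, hR₁.weak hR₂⟩
  | _ => cases hT

theorem Weak.exists_of_tens {P R Q : PTerm} {α β : List ℕ} (h : Weak (.tens P R) α β Q) :
    ∃ (P' R' : PTerm) (α₁ α₂ β₁ β₂ : List ℕ), Q = .tens P' R' ∧
      Weak P α₁ β₁ P' ∧ Weak R α₂ β₂ R' ∧ α = α₁ ++ α₂ ∧ β = β₁ ++ β₂ := by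
  generalize hT : tens P R = T at h
  induction h generalizing P R with
  | refl hb _ => subst hT; exact hb.elim
  | ten hP hR => cases hT; exact ⟨_, _, _, _, _, _, rfl, hP, hR, rfl, rfl⟩
  | weak _ _ ih₁ ih₂ =>
    obtain ⟨P₁, R₁, α₁, α₂, β₁, β₂, rfl, hP₁, hR₁, rfl, rfl⟩ := ih₁ hT
    obtain ⟨P₂, R₂, α₁', α₂', β₁', β₂', rfl, hP₂, hR₂, rfl, rfl⟩ := ih₂ rfl
    obtain ⟨hα, hβ⟩ := hP₁.length_eq_of_comp hP₂
    exact ⟨P₂, R₂, _, _, _, _, rfl, hP₁.weak hP₂, hR₁.weak hR₂,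
      List.zipWith_append hα, List.zipWith_append hβ⟩
  | _ => cases hT

end PTerm

/-- Lemma `syntaxdecomposition`: in the weak semantics of the
Petri calculus, transitions of sequential and parallel composites decompose
into transitions of the components. -/
theorem stmt9 :
    (∀ (P R : PTerm) (α β : List ℕ) (Q : PTerm),
       PTerm.Weak (.seq P R) α β Q →
       ∃ (P' R' : PTerm) (γ : List ℕ), Q = .seq P' R' ∧
         PTerm.Weak P α γ P' ∧ PTerm.Weak R γ β R') ∧
    (∀ (P R : PTerm) (α β : List ℕ) (Q : PTerm),
       PTerm.Weak (.tens P R) α β Q →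
       ∃ (P' R' : PTerm) (α₁ α₂ β₁ β₂ : List ℕ), Q = .tens P' R' ∧
         PTerm.Weak P α₁ β₁ P' ∧ PTerm.Weak R α₂ β₂ R' ∧
         α = α₁ ++ α₂ ∧ β = β₁ ++ β₂) :=
  ⟨fun _ _ _ _ _ => PTerm.Weak.exists_of_seq, fun _ _ _ _ _ => PTerm.Weak.exists_of_tens⟩
end

section
/- In the P/T calculus, for all n, h, k ∈ ℕ and every term Q: ⟨n⟩ ⇒h/k Q in the weak semantics if and only if k ≤ n + h and Q = ⟨n+h−k⟩. -/
/-- Syntax of the P/T calculus. -/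
inductive TTerm : Type
  | place (n : ℕ)       -- ⟨n⟩ (buffer with n tokens)
  | iden                -- I
  | tw                  -- X
  | diag                -- Δ
  | codiag              -- ∇
  | bot                 -- ⊥
  | top                 -- ⊤
  | lam                 -- Λ
  | vee                 -- V
  | down                -- ↓
  | up                  -- ↑
  | tens (P Q : TTerm)  -- ⊗
  | seq (P Q : TTerm)   -- ;
  deriving DecidableEq

namespace TTerm

/-- Sorting discipline of the P/T calculus. -/
inductive HasSort : TTerm → ℕ → ℕ → Prop
  | place (n : ℕ) : HasSort (.place n) 1 1
  | iden : HasSort .iden 1 1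
  | tw : HasSort .tw 2 2
  | diag : HasSort .diag 1 2
  | codiag : HasSort .codiag 2 1
  | bot : HasSort .bot 1 0
  | top : HasSort .top 0 1
  | lam : HasSort .lam 1 2
  | vee : HasSort .vee 2 1
  | down : HasSort .down 1 0
  | up : HasSort .up 0 1
  | tens {P Q : TTerm} {k l m n : ℕ} :
      HasSort P k l → HasSort Q m n → HasSort (.tens P Q) (k + m) (l + n)
  | seq {P Q : TTerm} {k n l : ℕ} :
      HasSort P k n → HasSort Q n l → HasSort (.seq P Q) k l

/-- Basic connectors are the constants of the calculus. -/
def IsBasic : TTerm → Prop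
  | .tens _ _ => False
  | .seq _ _ => False
  | _ => True

/-- Strong operational semantics of the P/T calculus. -/
inductive Step : TTerm → List ℕ → List ℕ → TTerm → Prop
  | place {n h k : ℕ} : k ≤ n → Step (.place n) [h] [k] (.place (n + h - k))
  | iden (k : ℕ) : Step .iden [k] [k] .iden
  | tw (h k : ℕ) : Step .tw [h, k] [k, h] .tw
  | bot (k : ℕ) : Step .bot [k] [] .bot
  | top (k : ℕ) : Step .top [] [k] .top
  | diag (k : ℕ) : Step .diag [k] [k, k] .diag
  | codiag (k : ℕ) : Step .codiag [k, k] [k] .codiag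
  | lam (h k : ℕ) : Step .lam [h + k] [h, k] .lam
  | vee (h k : ℕ) : Step .vee [h, k] [h + k] .vee
  | refl {C : TTerm} {k l : ℕ} : IsBasic C → HasSort C k l →
      Step C (List.replicate k 0) (List.replicate l 0) C
  | cut {P Q R S : TTerm} {α β γ : List ℕ} :
      Step P α γ Q → Step R γ β S → Step (.seq P R) α β (.seq Q S)
  | ten {P Q R S : TTerm} {α₁ α₂ β₁ β₂ : List ℕ} :
      Step P α₁ β₁ Q → Step R α₂ β₂ S →
      Step (.tens P R) (α₁ ++ α₂) (β₁ ++ β₂) (.tens Q S)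

/-- Weak operational semantics of the P/T calculus: same rules plus (Weak). -/
inductive Weak : TTerm → List ℕ → List ℕ → TTerm → Prop
  | place {n h k : ℕ} : k ≤ n → Weak (.place n) [h] [k] (.place (n + h - k))
  | iden (k : ℕ) : Weak .iden [k] [k] .iden
  | tw (h k : ℕ) : Weak .tw [h, k] [k, h] .tw
  | bot (k : ℕ) : Weak .bot [k] [] .bot
  | top (k : ℕ) : Weak .top [] [k] .top
  | diag (k : ℕ) : Weak .diag [k] [k, k] .diag
  | codiag (k : ℕ) : Weak .codiag [k, k] [k] .codiag
  | lam (h k : ℕ) : Weak .lam [h + k] [h, k] .lam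
  | vee (h k : ℕ) : Weak .vee [h, k] [h + k] .vee
  | refl {C : TTerm} {k l : ℕ} : IsBasic C → HasSort C k l →
      Weak C (List.replicate k 0) (List.replicate l 0) C
  | cut {P Q R S : TTerm} {α β γ : List ℕ} :
      Weak P α γ Q → Weak R γ β S → Weak (.seq P R) α β (.seq Q S)
  | ten {P Q R S : TTerm} {α₁ α₂ β₁ β₂ : List ℕ} :
      Weak P α₁ β₁ Q → Weak R α₂ β₂ S →
      Weak (.tens P R) (α₁ ++ α₂) (β₁ ++ β₂) (.tens Q S)
  | weak {P R Q : TTerm} {α₁ α₂ β₁ β₂ : List ℕ} :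
      Weak P α₁ β₁ R → Weak R α₂ β₂ Q →
      Weak P (List.zipWith (· + ·) α₁ α₂) (List.zipWith (· + ·) β₁ β₂) Q

end TTerm

lemma place_inv_aux {P : TTerm} {α β : List ℕ} {Q : TTerm}
    (w : TTerm.Weak P α β Q) :
    ∀ n, P = .place n →
      ∃ h k, α = [h] ∧ β = [k] ∧ k ≤ n + h ∧ Q = .place (n + h - k) := by
  induction w with
  | place hk => intro n hn; cases hn; exact ⟨_, _, rfl, rfl, by omega, rfl⟩
  | refl hb hs =>
    intro n hn; subst hn
    cases hs
    exact ⟨0, 0, rfl, rfl, by omega, by simp⟩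
  | weak w1 w2 ih1 ih2 =>
    intro n hn
    obtain ⟨h1, k1, rfl, rfl, hle1, hR⟩ := ih1 n hn
    obtain ⟨h2, k2, rfl, rfl, hle2, hQ⟩ := ih2 _ hR
    refine ⟨h1 + h2, k1 + k2, rfl, rfl, by omega, ?_⟩
    rw [hQ]; congr 1; omega
  | _ => intro n hn; simp_all

/-- Lemma `place-inv-weak`: in the weak semantics of the
P/T calculus, `⟨n⟩ ⇒h/k Q` iff `k ≤ n + h` and `Q = ⟨n+h−k⟩`. -/
theorem stmt13 (n h k : ℕ) (Q : TTerm) :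
    TTerm.Weak (.place n) [h] [k] Q ↔ (k ≤ n + h ∧ Q = .place (n + h - k)) := by
  constructor
  · intro w
    obtain ⟨h', k', hα, hβ, hle, hQ⟩ := place_inv_aux w n rfl
    cases hα; cases hβ
    simp_all
  · rintro ⟨hle, rfl⟩
    have w1 : TTerm.Weak (.place n) [h] [0] (.place (n + h)) := by
      simpa using TTerm.Weak.place (n := n) (h := h) (Nat.zero_le n)
    have w2 : TTerm.Weak (.place (n + h)) [0] [k] (.place (n + h - k)) := by
      simpa using TTerm.Weak.place (n := n + h) (h := 0) hle
    simpa using TTerm.Weak.weak w1 w2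
end

section
/- Both strong bisimilarity ∼ and weak bisimilarity ≈ of P/T calculus terms are congruences with respect to ';' and '⊗': for ⋈ ∈ {∼, ≈}, if P ⋈ Q then for any term R of appropriate sort, P;R ⋈ Q;R, R;P ⋈ R;Q, P⊗R ⋈ Q⊗R and R⊗P ⋈ R⊗Q. -/
/-- A bisimulation for a two-labelled transition system. -/
def IsBisimulation {S : Type*} {L : Type*} (tr : S → L → S → Prop)
    (R : S → S → Prop) : Prop :=
  ∀ p q, R p q →
    (∀ a p', tr p a p' → ∃ q', tr q a q' ∧ R p' q') ∧
    (∀ a q', tr q a q' → ∃ p', tr p a p' ∧ R p' q')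

/-- Bisimilarity: two states are bisimilar when some bisimulation relates them. -/
def Bisimilar {S : Type*} {L : Type*} (tr : S → L → S → Prop) (p q : S) : Prop :=
  ∃ R, IsBisimulation tr R ∧ R p q
/-- Strong transition relation of the P/T calculus, packaged with paired labels. -/
def ptcStrongTr : TTerm → List ℕ × List ℕ → TTerm → Prop :=
  fun P a Q => TTerm.Step P a.1 a.2 Q

/-- Weak transition relation of the P/T calculus, packaged with paired labels. -/
def ptcWeakTr : TTerm → List ℕ × List ℕ → TTerm → Prop :=
  fun P a Q => TTerm.Weak P a.1 a.2 Q

/-- Strong bisimilarity `∼` of P/T calculus terms. -/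
def TSBisim (P Q : TTerm) : Prop := Bisimilar ptcStrongTr P Q

/-- Weak bisimilarity `≈` of P/T calculus terms. -/
def TWBisim (P Q : TTerm) : Prop := Bisimilar ptcWeakTr P Q

/-!
A bisimulation relating `P` and `Q` extends to one relating `C[P]` and `C[Q]` for each of the
contexts `– ; R`, `R ; –`, `– ⊗ R`, `R ⊗ –`: every move of a composite is built by (Cut) or
(Ten) from one move of each component, so the move of the `P`-component can be swapped for a
matching move of `Q`. For the strong semantics this is inversion of the last rule. In the weak
semantics (Weak) may also add two moves of a composite, but these re-split into added moves of
the components; for `⊗` this uses that the label lengths of a term's moves are fixed by its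
syntax (`arity`), so that pointwise addition commutes with concatenation.
-/

/-- Every move of `op x r` comes from a move of `x`, and any other state can replay it in the
same context. -/
def TransitionsDecompose {S L : Type*} (tr : S → L → S → Prop) (op : S → S → S) : Prop :=
  ∀ x r a u, tr (op x r) a u →
    ∃ b x' r', tr x b x' ∧ u = op x' r' ∧ ∀ z z', tr z b z' → tr (op z r) a (op z' r')

theorem Bisimilar.congr_of_transitionsDecompose {S L : Type*} {tr : S → L → S → Prop}
    {op : S → S → S} (hop : TransitionsDecompose tr op) {p q : S} (h : Bisimilar tr p q)
    (r : S) : Bisimilar tr (op p r) (op q r) := by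
  obtain ⟨B, hB, hpq⟩ := h
  refine ⟨fun u v => ∃ x y r, B x y ∧ u = op x r ∧ v = op y r, ?_, p, q, r, hpq, rfl, rfl⟩
  rintro _ _ ⟨x, y, r, hxy, rfl, rfl⟩
  constructor
  · intro a u hu
    obtain ⟨b, x', r', hx, rfl, lift⟩ := hop x r a u hu
    obtain ⟨y', hy, hxy'⟩ := (hB x y hxy).1 b x' hx
    exact ⟨op y' r', lift y y' hy, x', y', r', hxy', rfl, rfl⟩
  · intro a v hv
    obtain ⟨b, y', r', hy, rfl, lift⟩ := hop y r a v hv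
    obtain ⟨x', hx, hxy'⟩ := (hB x y hxy).2 b y' hy
    exact ⟨op x' r', lift x x' hx, x', y', r', hxy', rfl, rfl⟩

namespace TTerm

def arity : TTerm → ℕ × ℕ
  | place _ | iden => (1, 1)
  | tw => (2, 2)
  | diag | lam => (1, 2)
  | codiag | vee => (2, 1)
  | bot | down => (1, 0)
  | top | up => (0, 1)
  | tens P Q => (P.arity.1 + Q.arity.1, P.arity.2 + Q.arity.2)
  | seq P Q => (P.arity.1, Q.arity.2)

theorem HasSort.arity_eq {P : TTerm} {k l : ℕ} (h : HasSort P k l) : P.arity = (k, l) := by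
  induction h <;> simp_all [arity]

theorem Weak.arity_eq {P Q : TTerm} {α β : List ℕ} (h : Weak P α β Q) :
    α.length = P.arity.1 ∧ β.length = P.arity.2 ∧ Q.arity = P.arity := by
  induction h with
  | refl _ hs => simp [hs.arity_eq]
  | cut _ _ ih₁ ih₂ => simp_all [arity]
  | ten _ _ ih₁ ih₂ => simp_all [arity]
  | weak _ _ ih₁ ih₂ => simp_all [List.length_zipWith]
  | _ => simp [arity]

structure IsCompositional (tr : TTerm → List ℕ × List ℕ → TTerm → Prop) : Prop where
  cut {P Q R S : TTerm} {α β γ : List ℕ} :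
    tr P (α, γ) Q → tr R (γ, β) S → tr (.seq P R) (α, β) (.seq Q S)
  ten {P Q R S : TTerm} {α₁ α₂ β₁ β₂ : List ℕ} :
    tr P (α₁, β₁) Q → tr R (α₂, β₂) S → tr (.tens P R) (α₁ ++ α₂, β₁ ++ β₂) (.tens Q S)
  seq_inv {A B U : TTerm} {α β : List ℕ} :
    tr (.seq A B) (α, β) U → ∃ A' B' γ, U = .seq A' B' ∧ tr A (α, γ) A' ∧ tr B (γ, β) B'
  tens_inv {A B U : TTerm} {α β : List ℕ} :
    tr (.tens A B) (α, β) U → ∃ A' B' α₁ α₂ β₁ β₂, U = .tens A' B' ∧ α = α₁ ++ α₂ ∧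
      β = β₁ ++ β₂ ∧ tr A (α₁, β₁) A' ∧ tr B (α₂, β₂) B'

theorem Step.seq_inv {A B U : TTerm} {α β : List ℕ} (h : Step (.seq A B) α β U) :
    ∃ A' B' γ, U = .seq A' B' ∧ Step A α γ A' ∧ Step B γ β B' := by
  cases h with
  | refl hb _ => exact hb.elim
  | cut h₁ h₂ => exact ⟨_, _, _, rfl, h₁, h₂⟩

theorem Step.tens_inv {A B U : TTerm} {α β : List ℕ} (h : Step (.tens A B) α β U) :
    ∃ A' B' α₁ α₂ β₁ β₂, U = .tens A' B' ∧ α = α₁ ++ α₂ ∧ β = β₁ ++ β₂ ∧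
      Step A α₁ β₁ A' ∧ Step B α₂ β₂ B' := by
  cases h with
  | refl hb _ => exact hb.elim
  | ten h₁ h₂ => exact ⟨_, _, _, _, _, _, rfl, rfl, rfl, h₁, h₂⟩

theorem Step.isCompositional : IsCompositional ptcStrongTr where
  cut := .cut
  ten := .ten
  seq_inv := Step.seq_inv
  tens_inv := Step.tens_inv

theorem Weak.seq_inv {A B U : TTerm} {α β : List ℕ} (h : Weak (.seq A B) α β U) :
    ∃ A' B' γ, U = .seq A' B' ∧ Weak A α γ A' ∧ Weak B γ β B' := by
  generalize hT : TTerm.seq A B = T at h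
  induction h generalizing A B with
  | refl hb _ => subst hT; exact hb.elim
  | cut h₁ h₂ => cases hT; exact ⟨_, _, _, rfl, h₁, h₂⟩
  | weak _ _ ih₁ ih₂ =>
    obtain ⟨A₁, B₁, γ₁, rfl, hA₁, hB₁⟩ := ih₁ hT
    obtain ⟨A₂, B₂, γ₂, rfl, hA₂, hB₂⟩ := ih₂ rfl
    exact ⟨A₂, B₂, _, rfl, hA₁.weak hA₂, hB₁.weak hB₂⟩
  | _ => cases hT

theorem Weak.tens_inv {A B U : TTerm} {α β : List ℕ} (h : Weak (.tens A B) α β U) :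
    ∃ A' B' α₁ α₂ β₁ β₂, U = .tens A' B' ∧ α = α₁ ++ α₂ ∧ β = β₁ ++ β₂ ∧
      Weak A α₁ β₁ A' ∧ Weak B α₂ β₂ B' := by
  generalize hT : TTerm.tens A B = T at h
  induction h generalizing A B with
  | refl hb _ => subst hT; exact hb.elim
  | ten h₁ h₂ => cases hT; exact ⟨_, _, _, _, _, _, rfl, rfl, rfl, h₁, h₂⟩
  | weak _ _ ih₁ ih₂ =>
    obtain ⟨A₁, B₁, α₁, α₂, β₁, β₂, rfl, rfl, rfl, hA₁, hB₁⟩ := ih₁ hT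
    obtain ⟨A₂, B₂, α₁', α₂', β₁', β₂', rfl, rfl, rfl, hA₂, hB₂⟩ := ih₂ rfl
    -- pointwise addition commutes with `++` only because the left pieces have equal lengths
    obtain ⟨hα₁, hβ₁, hA₁A⟩ := hA₁.arity_eq
    obtain ⟨hα₁', hβ₁', -⟩ := hA₂.arity_eq
    rw [hA₁A] at hα₁' hβ₁'
    refine ⟨A₂, B₂, _, _, _, _, rfl, ?_, ?_, hA₁.weak hA₂, hB₁.weak hB₂⟩ <;>
      exact List.zipWith_append (by omega)
  | _ => cases hT

theorem Weak.isCompositional : IsCompositional ptcWeakTr where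
  cut := .cut
  ten := .ten
  seq_inv := Weak.seq_inv
  tens_inv := Weak.tens_inv

namespace IsCompositional

variable {tr : TTerm → List ℕ × List ℕ → TTerm → Prop} (hT : IsCompositional tr)
include hT

theorem transitionsDecompose_seq_left : TransitionsDecompose tr (fun x r => .seq x r) := by
  rintro x r ⟨α, β⟩ u h
  obtain ⟨x', r', γ, rfl, hx, hr⟩ := hT.seq_inv h
  exact ⟨(α, γ), x', r', hx, rfl, fun _ _ hz => hT.cut hz hr⟩

theorem transitionsDecompose_seq_right : TransitionsDecompose tr (fun x r => .seq r x) := by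
  rintro x r ⟨α, β⟩ u h
  obtain ⟨r', x', γ, rfl, hr, hx⟩ := hT.seq_inv h
  exact ⟨(γ, β), x', r', hx, rfl, fun _ _ hz => hT.cut hr hz⟩

theorem transitionsDecompose_tens_left : TransitionsDecompose tr (fun x r => .tens x r) := by
  rintro x r ⟨α, β⟩ u h
  obtain ⟨x', r', α₁, α₂, β₁, β₂, rfl, rfl, rfl, hx, hr⟩ := hT.tens_inv h
  exact ⟨(α₁, β₁), x', r', hx, rfl, fun _ _ hz => hT.ten hz hr⟩

theorem transitionsDecompose_tens_right : TransitionsDecompose tr (fun x r => .tens r x) := by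
  rintro x r ⟨α, β⟩ u h
  obtain ⟨r', x', α₁, α₂, β₁, β₂, rfl, rfl, rfl, hr, hx⟩ := hT.tens_inv h
  exact ⟨(α₂, β₂), x', r', hx, rfl, fun _ _ hz => hT.ten hr hz⟩

theorem bisimilar_congr {P Q : TTerm} (h : Bisimilar tr P Q) (R : TTerm) :
    Bisimilar tr (.seq P R) (.seq Q R) ∧ Bisimilar tr (.seq R P) (.seq R Q) ∧
      Bisimilar tr (.tens P R) (.tens Q R) ∧ Bisimilar tr (.tens R P) (.tens R Q) :=
  ⟨Bisimilar.congr_of_transitionsDecompose hT.transitionsDecompose_seq_left h R,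
    Bisimilar.congr_of_transitionsDecompose hT.transitionsDecompose_seq_right h R,
    Bisimilar.congr_of_transitionsDecompose hT.transitionsDecompose_tens_left h R,
    Bisimilar.congr_of_transitionsDecompose hT.transitionsDecompose_tens_right h R⟩

end IsCompositional

end TTerm

theorem stmt14_general (P Q : TTerm) (k l : ℕ) :
    (TSBisim P Q →
       (∀ (R : TTerm) (m : ℕ), TTerm.HasSort R l m →
          TSBisim (.seq P R) (.seq Q R)) ∧
       (∀ (R : TTerm) (m : ℕ), TTerm.HasSort R m k →
          TSBisim (.seq R P) (.seq R Q)) ∧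
       (∀ (R : TTerm) (m n : ℕ), TTerm.HasSort R m n →
          TSBisim (.tens P R) (.tens Q R) ∧ TSBisim (.tens R P) (.tens R Q))) ∧
    (TWBisim P Q →
       (∀ (R : TTerm) (m : ℕ), TTerm.HasSort R l m →
          TWBisim (.seq P R) (.seq Q R)) ∧
       (∀ (R : TTerm) (m : ℕ), TTerm.HasSort R m k →
          TWBisim (.seq R P) (.seq R Q)) ∧
       (∀ (R : TTerm) (m n : ℕ), TTerm.HasSort R m n →
          TWBisim (.tens P R) (.tens Q R) ∧ TWBisim (.tens R P) (.tens R Q))) := by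
  refine ⟨fun h => ?_, fun h => ?_⟩
  · have congr R := TTerm.Step.isCompositional.bisimilar_congr h R
    exact ⟨fun R _ _ => (congr R).1, fun R _ _ => (congr R).2.1,
      fun R _ _ _ => (congr R).2.2⟩
  · have congr R := TTerm.Weak.isCompositional.bisimilar_congr h R
    exact ⟨fun R _ _ => (congr R).1, fun R _ _ => (congr R).2.1,
      fun R _ _ _ => (congr R).2.2⟩

/-- Proposition `petricongruence-pt`: both strong and weak
bisimilarity of P/T calculus terms are congruences w.r.t. `;` and `⊗`. -/
theorem stmt14 (P Q : TTerm) (k l : ℕ)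
    (hP : TTerm.HasSort P k l) (hQ : TTerm.HasSort Q k l) :
    (TSBisim P Q →
       (∀ (R : TTerm) (m : ℕ), TTerm.HasSort R l m →
          TSBisim (.seq P R) (.seq Q R)) ∧
       (∀ (R : TTerm) (m : ℕ), TTerm.HasSort R m k →
          TSBisim (.seq R P) (.seq R Q)) ∧
       (∀ (R : TTerm) (m n : ℕ), TTerm.HasSort R m n →
          TSBisim (.tens P R) (.tens Q R) ∧ TSBisim (.tens R P) (.tens R Q))) ∧
    (TWBisim P Q →
       (∀ (R : TTerm) (m : ℕ), TTerm.HasSort R l m →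
          TWBisim (.seq P R) (.seq Q R)) ∧
       (∀ (R : TTerm) (m : ℕ), TTerm.HasSort R m k →
          TWBisim (.seq R P) (.seq R Q)) ∧
       (∀ (R : TTerm) (m n : ℕ), TTerm.HasSort R m n →
          TWBisim (.tens P R) (.tens Q R) ∧ TWBisim (.tens R P) (.tens R Q))) :=
  stmt14_general P Q k l
end
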